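/- In a digraph, let s and t be two vertices (possibly identical) both of which two-reach a vertex v. If there exists a vertex u such that some directed path from u to s and some directed path from u to t are arc-disjoint, then u two-reaches v. -/

import Mathlib

/-- The list of arcs (consecutive pairs) of a list of vertices. -/
def listArcs {V : Type*} (p : List V) : List (V × V) := p.zip p.tail

/-- `p` is a directed path from `u` to `v` in the digraph with arc set `A`. -/
def IsDipath {V : Type*} (A : Finset (V × V)) (u v : V) (p : List V) : Prop :=
  p ≠ [] ∧ p.head? = some u ∧ p.getLast? = some v ∧ p.Nodup ∧
    p.Chain' (fun a b => (a, b) ∈ A)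

/-- Two paths (given as vertex lists) are arc-disjoint. -/
def ArcDisjoint {V : Type*} (p q : List V) : Prop :=
  ∀ e ∈ listArcs p, e ∉ listArcs q

/-- `u` reaches `v`: there is a directed path from `u` to `v`. -/
def Reaches {V : Type*} (A : Finset (V × V)) (u v : V) : Prop :=
  ∃ p, IsDipath A u v p

/-- `u` two-reaches `v`: there are two arc-disjoint directed paths from `u` to `v`. -/
def TwoReaches {V : Type*} (A : Finset (V × V)) (u v : V) : Prop :=
  ∃ p q, IsDipath A u v p ∧ IsDipath A u v q ∧ ArcDisjoint p q

/-- A digraph is strongly connected if every vertex reaches every other vertex. -/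
def StronglyConnected {V : Type*} (A : Finset (V × V)) : Prop :=
  ∀ u v : V, Reaches A u v

/-- The digraph obtained by reversing every arc of the path `p`. -/
def reverseAlong {V : Type*} [DecidableEq V] (A : Finset (V × V)) (p : List V) :
    Finset (V × V) :=
  (A \ (listArcs p).toFinset) ∪ ((listArcs p).map Prod.swap).toFinset

/-- The indegree of a vertex in the digraph with arc set `A`. -/
def inDeg {V : Type*} [DecidableEq V] (A : Finset (V × V)) (v : V) : ℕ :=
  (A.filter (fun e => e.2 = v)).card

/-- The indegree sequence: the indegrees of all vertices in non-increasing order. -/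
def degSeq (V : Type*) [Fintype V] [DecidableEq V] (A : Finset (V × V)) : List ℕ :=
  ((Finset.univ.val.map (inDeg A)).sort (· ≤ ·)).reverse

/-- `A` is an orientation of the simple graph `G`: every edge of `G` gets exactly one
direction, and every arc of `A` comes from an edge of `G`. -/
def IsOrientation {V : Type*} (G : SimpleGraph V) (A : Finset (V × V)) : Prop :=
  (∀ a b : V, G.Adj a b ↔ ((a, b) ∈ A ∨ (b, a) ∈ A)) ∧
    ∀ a b : V, ¬((a, b) ∈ A ∧ (b, a) ∈ A)

/-- The underlying undirected simple graph of a digraph. -/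
def underlying {V : Type*} (A : Finset (V × V)) : SimpleGraph V :=
  SimpleGraph.fromRel (fun a b => (a, b) ∈ A)

/-- `p` is a directed path from `u` to `v` all of whose vertices lie in `S`. -/
def IsDipathIn {V : Type*} (A : Finset (V × V)) (S : Set V) (u v : V) (p : List V) : Prop :=
  IsDipath A u v p ∧ ∀ x ∈ p, x ∈ S

/-- `u` reaches `v` within the induced subdigraph on `S`. -/
def ReachesWithin {V : Type*} (A : Finset (V × V)) (S : Set V) (u v : V) : Prop :=
  ∃ p, IsDipathIn A S u v p

/-!
No single arc separates `u` from `v`: an arc `e` misses one of the two arc-disjoint paths from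
`u` to `s` and to `t`, say the one to `s`, and it misses one of the two arc-disjoint paths from
`s` to `v`. By Menger's theorem for two arc-disjoint paths, `u` then two-reaches `v`.

Menger's theorem is proved with one augmenting path: given a path `P` from `u` to `v`, a cut
argument gives a path `Q` from `u` to `v` in the digraph with `P` reversed. Cancelling opposite
arcs of `P` and `Q` leaves a set of arcs of the digraph with net outflow `2` at `u`, `-2` at `v`
and `0` elsewhere, and such a set contains two arc-disjoint paths from `u` to `v`.
-/

section Paths
variable {V : Type*}

@[simp]
theorem listArcs_cons_cons (a b : V) (l : List V) :
    listArcs (a :: b :: l) = (a, b) :: listArcs (b :: l) := rfl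

@[simp]
theorem listArcs_singleton (a : V) : listArcs [a] = [] := rfl

theorem fst_mem_of_mem_listArcs {l : List V} {e : V × V} (h : e ∈ listArcs l) : e.1 ∈ l :=
  (List.of_mem_zip h).1

theorem snd_mem_of_mem_listArcs {l : List V} {e : V × V} (h : e ∈ listArcs l) : e.2 ∈ l :=
  List.mem_of_mem_tail (List.of_mem_zip h).2

theorem List.isChain_iff_forall_mem_listArcs {R : V → V → Prop} {l : List V} :
    l.IsChain R ↔ ∀ e ∈ listArcs l, R e.1 e.2 := by
  induction l using List.twoStepInduction with
  | nil => simp [listArcs]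
  | singleton => simp
  | cons_cons a b l _ ih => simp [ih]

theorem nodup_listArcs {l : List V} (h : l.Nodup) : (listArcs l).Nodup := by
  induction l using List.twoStepInduction with
  | nil => simp [listArcs]
  | singleton => simp
  | cons_cons a b l _ ih =>
    rw [listArcs_cons_cons, List.nodup_cons]
    exact ⟨fun hab => (List.nodup_cons.1 h).1 (fst_mem_of_mem_listArcs hab), ih b h.of_cons⟩

theorem swap_notMem_listArcs {l : List V} (h : l.Nodup) {e : V × V}
    (he : e ∈ listArcs l) : e.swap ∉ listArcs l := by
  induction l using List.twoStepInduction with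
  | nil => simp [listArcs] at he
  | singleton => simp at he
  | cons_cons a b l _ ih =>
    have ha : a ∉ b :: l := (List.nodup_cons.1 h).1
    obtain ⟨x, y⟩ := e
    simp only [listArcs_cons_cons, List.mem_cons, Prod.swap_prod_mk, Prod.mk.injEq] at he ⊢
    rintro (⟨rfl, rfl⟩ | hs)
    · rcases he with ⟨rfl, -⟩ | he
      · exact ha List.mem_cons_self
      · exact ha (snd_mem_of_mem_listArcs he)
    · rcases he with ⟨rfl, rfl⟩ | he
      · exact ha (snd_mem_of_mem_listArcs hs)
      · exact ih b h.of_cons he hs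

end Paths

section Reach
variable {V : Type*} {A B : Finset (V × V)} {u v w : V} {p : List V}

theorem isDipath_iff : IsDipath A u v p ↔ p ≠ [] ∧ p.head? = some u ∧ p.getLast? = some v ∧
    p.Nodup ∧ p.IsChain (fun a b => (a, b) ∈ A) := Iff.rfl

theorem isDipath_singleton (A : Finset (V × V)) (v : V) : IsDipath A v v [v] := by
  simp [isDipath_iff]

theorem IsDipath.mem_of_mem_listArcs (hp : IsDipath A u v p) {e : V × V}
    (he : e ∈ listArcs p) : e ∈ A :=
  List.isChain_iff_forall_mem_listArcs.1 (isDipath_iff.1 hp).2.2.2.2 e he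

theorem IsDipath.of_listArcs_subset (hp : IsDipath A u v p) (h : ∀ e ∈ listArcs p, e ∈ B) :
    IsDipath B u v p := by
  obtain ⟨hne, hu, hv, hnd, -⟩ := isDipath_iff.1 hp
  exact ⟨hne, hu, hv, hnd, List.isChain_iff_forall_mem_listArcs.2 h⟩

theorem IsDipath.reflTransGen (hp : IsDipath A u v p) :
    Relation.ReflTransGen (fun a b => (a, b) ∈ A) u v := by
  obtain ⟨hne, hu, hv, -, hc⟩ := isDipath_iff.1 hp
  convert List.relationReflTransGen_of_exists_isChain p hc hne
  · simpa [List.head?_eq_some_head hne, eq_comm] using hu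
  · simpa [List.getLast?_eq_some_getLast hne, eq_comm] using hv

/-- If `a` already lies on the path, the path is cut at `a` to stay simple. -/
theorem Reaches.head {a b : V} (hab : (a, b) ∈ A) (h : Reaches A b v) : Reaches A a v := by
  obtain ⟨p, hne, hb, hv, hnd, hc⟩ := h
  by_cases ha : a ∈ p
  · obtain ⟨s, t, rfl⟩ := List.append_of_mem ha
    refine ⟨a :: t, List.cons_ne_nil _ _, rfl, ?_, hnd.sublist (List.sublist_append_right _ _),
      List.IsChain.right_of_append hc⟩
    rwa [← List.getLast?_append_cons s]
  · obtain ⟨c, p, rfl⟩ := List.exists_cons_of_ne_nil hne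
    obtain rfl : c = b := by simpa using hb
    refine ⟨a :: c :: p, List.cons_ne_nil _ _, rfl, ?_, List.nodup_cons.2 ⟨ha, hnd⟩,
      List.isChain_cons_cons.2 ⟨hab, hc⟩⟩
    rwa [List.getLast?_cons_cons]

theorem Reaches.refl (A : Finset (V × V)) (v : V) : Reaches A v v :=
  ⟨[v], isDipath_singleton A v⟩

theorem reaches_iff_reflTransGen :
    Reaches A u v ↔ Relation.ReflTransGen (fun a b => (a, b) ∈ A) u v := by
  refine ⟨fun ⟨p, hp⟩ => hp.reflTransGen, fun h => ?_⟩
  induction h using Relation.ReflTransGen.head_induction_on with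
  | refl => exact Reaches.refl A v
  | head hab _ ih => exact ih.head hab

theorem Reaches.trans (huv : Reaches A u v) (hvw : Reaches A v w) : Reaches A u w :=
  reaches_iff_reflTransGen.2
    ((reaches_iff_reflTransGen.1 huv).trans (reaches_iff_reflTransGen.1 hvw))

theorem Reaches.tail {a b : V} (h : Reaches A u a) (hab : (a, b) ∈ A) : Reaches A u b :=
  h.trans ((Reaches.refl A b).head hab)

theorem Reaches.mem_of_closed {R : Set V} (hu : u ∈ R)
    (hR : ∀ a b, (a, b) ∈ A → a ∈ R → b ∈ R) (h : Reaches A u v) : v ∈ R := by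
  rw [reaches_iff_reflTransGen] at h
  induction h with
  | refl => exact hu
  | tail _ hab ih => exact hR _ _ hab ih

end Reach

section NetOutflow
variable {V : Type*} [DecidableEq V]

/-- `netOutflow B w` is the out-degree minus the in-degree of `w` in `B`. -/
def netOutflow (B : Finset (V × V)) : V → ℤ :=
  ∑ e ∈ B, (Pi.single e.1 1 - Pi.single e.2 1)

theorem netOutflow_union {B C : Finset (V × V)} (h : Disjoint B C) :
    netOutflow (B ∪ C) = netOutflow B + netOutflow C :=
  Finset.sum_union h

theorem netOutflow_sdiff {B C : Finset (V × V)} (h : C ⊆ B) :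
    netOutflow (B \ C) = netOutflow B - netOutflow C :=
  eq_sub_of_add_eq (Finset.sum_sdiff h)

theorem netOutflow_image_swap (B : Finset (V × V)) :
    netOutflow (B.image Prod.swap) = -netOutflow B := by
  rw [netOutflow, Finset.sum_image (fun x _ y _ h => Prod.swap_injective h), netOutflow,
    ← Finset.sum_neg_distrib]
  simp

theorem netOutflow_filter_swap_notMem (B : Finset (V × V)) :
    netOutflow (B.filter fun e => e.swap ∉ B) = netOutflow B := by
  set T := B.filter fun e => e.swap ∈ B
  have hT : T.image Prod.swap = T := by
    ext e
    simp only [T, Finset.mem_image, Finset.mem_filter]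
    exact ⟨by rintro ⟨f, ⟨hf, hfs⟩, rfl⟩; simpa [hf] using hfs,
      fun ⟨he, hes⟩ => ⟨e.swap, ⟨hes, by simpa using he⟩, Prod.swap_swap e⟩⟩
  have hT0 : netOutflow T = 0 := by
    have := netOutflow_image_swap T
    rw [hT] at this
    funext w
    have hw := congrFun this w
    rw [Pi.neg_apply] at hw
    rw [Pi.zero_apply]
    omega
  conv_rhs => rw [netOutflow, ← Finset.sum_filter_add_sum_filter_not B (fun e => e.swap ∈ B)]
  change _ = netOutflow T + netOutflow _
  rw [hT0, zero_add]

theorem sum_listArcs_single_sub_single {a v : V} {l : List V}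
    (hv : (a :: l).getLast? = some v) :
    ((listArcs (a :: l)).map fun e => (Pi.single e.1 1 - Pi.single e.2 1 : V → ℤ)).sum =
      Pi.single a 1 - Pi.single v 1 := by
  induction l generalizing a with
  | nil => simp_all
  | cons b l ih =>
    rw [List.getLast?_cons_cons] at hv
    rw [listArcs_cons_cons, List.map_cons, List.sum_cons, ih hv]
    abel

theorem IsDipath.netOutflow_listArcs {A : Finset (V × V)} {u v : V} {p : List V}
    (hp : IsDipath A u v p) :
    netOutflow (listArcs p).toFinset = Pi.single u 1 - Pi.single v 1 := by
  obtain ⟨hne, hu, hv, hnd, -⟩ := isDipath_iff.1 hp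
  obtain ⟨a, l, rfl⟩ := List.exists_cons_of_ne_nil hne
  obtain rfl : a = u := by simpa using hu
  rw [netOutflow, List.sum_toFinset _ (nodup_listArcs hnd), sum_listArcs_single_sub_single hv]

theorem sum_netOutflow (B : Finset (V × V)) (R : Finset V) :
    ∑ w ∈ R, netOutflow B w =
      (B.filter fun e => e.1 ∈ R ∧ e.2 ∉ R).card - (B.filter fun e => e.1 ∉ R ∧ e.2 ∈ R).card := by
  simp only [netOutflow, Finset.sum_apply]
  rw [Finset.sum_comm]
  simp only [Pi.sub_apply, Finset.sum_sub_distrib, Finset.sum_pi_single', Finset.card_filter]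
  push_cast
  rw [← Finset.sum_sub_distrib, ← Finset.sum_sub_distrib]
  refine Finset.sum_congr rfl fun e _ => ?_
  by_cases h1 : e.1 ∈ R <;> by_cases h2 : e.2 ∈ R <;> simp [h1, h2]

end NetOutflow

section Flow
variable {V : Type*} [Fintype V] [DecidableEq V] {A F : Finset (V × V)} {u v : V}

/-- The set of vertices reachable from `u` has no outgoing arc, so its net outflow is
`≤ 0`; it would be positive if `v` were not in it. -/
theorem reaches_of_netOutflow (hu : 0 < netOutflow F u) (hw : ∀ w, w ≠ v → 0 ≤ netOutflow F w) :
    Reaches F u v := by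
  classical
  by_contra hv
  set R := Finset.univ.filter (Reaches F u ·)
  have huR : u ∈ R := by simpa [R] using Reaches.refl F u
  have hvR : v ∉ R := by simpa [R] using hv
  have hpos : 0 < ∑ w ∈ R, netOutflow F w :=
    hu.trans_le (Finset.single_le_sum (fun w hwR => hw w (ne_of_mem_of_not_mem hwR hvR)) huR)
  have hclosed : (F.filter fun e => e.1 ∈ R ∧ e.2 ∉ R) = ∅ :=
    Finset.filter_eq_empty_iff.2 fun e he ⟨h1, h2⟩ => h2 (by
      simp only [R, Finset.mem_filter, Finset.mem_univ, true_and] at h1 ⊢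
      exact h1.tail he)
  rw [sum_netOutflow, hclosed, Finset.card_empty] at hpos
  omega

theorem reaches_of_netOutflow_eq_smul (huv : u ≠ v) {n : ℤ} (hn : 0 < n)
    (hF : netOutflow F = n • (Pi.single u 1 - Pi.single v 1)) : Reaches F u v := by
  refine reaches_of_netOutflow (by simp [hF, huv, hn]) fun w hw => ?_
  by_cases hwu : w = u
  · subst hwu; simp [hF, hw, hn.le]
  · simp [hF, hw, hwu]

theorem twoReaches_of_netOutflow (hFA : F ⊆ A) (huv : u ≠ v)
    (hF : netOutflow F = (2 : ℤ) • (Pi.single u 1 - Pi.single v 1)) : TwoReaches A u v := by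
  obtain ⟨p, hp⟩ := reaches_of_netOutflow_eq_smul huv two_pos hF
  have hpF : (listArcs p).toFinset ⊆ F := fun e he =>
    hp.mem_of_mem_listArcs (List.mem_toFinset.1 he)
  obtain ⟨q, hq⟩ := reaches_of_netOutflow_eq_smul (F := F \ (listArcs p).toFinset) huv one_pos
    (by rw [netOutflow_sdiff hpF, hF, hp.netOutflow_listArcs]; module)
  refine ⟨p, q, hp.of_listArcs_subset fun e he => hFA (hp.mem_of_mem_listArcs he),
    hq.of_listArcs_subset fun e he => hFA (Finset.sdiff_subset (hq.mem_of_mem_listArcs he)),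
    fun e hep heq => ?_⟩
  exact (Finset.mem_sdiff.1 (hq.mem_of_mem_listArcs heq)).2 (List.mem_toFinset.2 hep)

end Flow

section Augment
variable {V : Type*} [DecidableEq V] {A : Finset (V × V)} {u v : V} {P : List V}

theorem mem_reverseAlong {e : V × V} :
    e ∈ reverseAlong A P ↔ (e ∈ A ∧ e ∉ listArcs P) ∨ e.swap ∈ listArcs P := by
  obtain ⟨a, b⟩ := e
  simp [reverseAlong]

variable [Fintype V]

/-- If `v` were not reachable from `u` after reversing `P`, let `R` be the set of vertices that
are. An arc of `A` leaving `R` must lie on `P`, and no arc of `P` enters `R`, so by the net outflow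
`1` of `P` across `R` exactly one arc of `A` leaves `R`; deleting it would separate `u` from `v`. -/
theorem IsDipath.reaches_reverseAlong (hP : IsDipath A u v P)
    (h : ∀ e, Reaches (A.erase e) u v) : Reaches (reverseAlong A P) u v := by
  classical
  by_contra hv
  set R := Finset.univ.filter (Reaches (reverseAlong A P) u ·)
  have hR : ∀ x, x ∈ R ↔ Reaches (reverseAlong A P) u x := by simp [R]
  have huR : u ∈ R := (hR u).2 (Reaches.refl _ u)
  have hvR : v ∉ R := fun hvR => hv ((hR v).1 hvR)
  set AP := (listArcs P).toFinset
  have hin : (AP.filter fun e => e.1 ∉ R ∧ e.2 ∈ R) = ∅ :=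
    Finset.filter_eq_empty_iff.2 fun e he ⟨h1, h2⟩ => h1 <| (hR _).2 <|
      ((hR _).1 h2).tail (mem_reverseAlong.2 (Or.inr (List.mem_toFinset.1 he)))
  have hsum : ∑ w ∈ R, netOutflow AP w = 1 := by
    simp [AP, hP.netOutflow_listArcs, Finset.sum_sub_distrib, huR, hvR]
  rw [sum_netOutflow, hin, Finset.card_empty] at hsum
  obtain ⟨e₀, he₀⟩ := Finset.card_eq_one.1
    (show (AP.filter fun e => e.1 ∈ R ∧ e.2 ∉ R).card = 1 by omega)
  have hclosed : ∀ a b, (a, b) ∈ A.erase e₀ → a ∈ R → b ∈ R := by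
    intro a b hab ha
    by_contra hb
    obtain ⟨hne, habA⟩ := Finset.mem_erase.1 hab
    by_cases habP : (a, b) ∈ AP
    · have : (a, b) ∈ AP.filter fun e => e.1 ∈ R ∧ e.2 ∉ R := Finset.mem_filter.2 ⟨habP, ha, hb⟩
      exact hne (Finset.mem_singleton.1 (he₀ ▸ this))
    · exact hb <| (hR _).2 <| ((hR _).1 ha).tail <|
        mem_reverseAlong.2 (Or.inl ⟨habA, fun h => habP (List.mem_toFinset.2 h)⟩)
  exact hvR ((h e₀).mem_of_closed (R := ↑R) huR hclosed)

/-- Menger's theorem (arc version) for two paths. -/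
theorem twoReaches_of_forall_reaches_erase (h : ∀ e, Reaches (A.erase e) u v) :
    TwoReaches A u v := by
  rcases eq_or_ne u v with rfl | huv
  · exact ⟨[u], [u], isDipath_singleton A u, isDipath_singleton A u, by simp [ArcDisjoint]⟩
  obtain ⟨P, hP⟩ := h (u, v)
  replace hP : IsDipath A u v P :=
    hP.of_listArcs_subset fun e he => Finset.mem_of_mem_erase (hP.mem_of_mem_listArcs he)
  obtain ⟨Q, hQ⟩ := hP.reaches_reverseAlong h
  have hQ' : ∀ e ∈ listArcs Q, (e ∈ A ∧ e ∉ listArcs P) ∨ e.swap ∈ listArcs P :=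
    fun e he => mem_reverseAlong.1 (hQ.mem_of_mem_listArcs he)
  have hdisj : Disjoint (listArcs P).toFinset (listArcs Q).toFinset := by
    refine Finset.disjoint_left.2 fun e heP heQ => ?_
    rw [List.mem_toFinset] at heP heQ
    rcases hQ' e heQ with ⟨-, he⟩ | he
    · exact he heP
    · exact swap_notMem_listArcs (isDipath_iff.1 hP).2.2.2.1 heP he
  set S := (listArcs P).toFinset ∪ (listArcs Q).toFinset
  refine twoReaches_of_netOutflow (F := S.filter fun e => e.swap ∉ S) (fun e he => ?_) huv ?_
  · obtain ⟨heS, hes⟩ := Finset.mem_filter.1 he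
    rcases Finset.mem_union.1 heS with heP | heQ
    · exact hP.mem_of_mem_listArcs (List.mem_toFinset.1 heP)
    · rcases hQ' e (List.mem_toFinset.1 heQ) with ⟨heA, -⟩ | he
      · exact heA
      · exact absurd (Finset.mem_union_left _ (List.mem_toFinset.2 he)) hes
  · rw [netOutflow_filter_swap_notMem, netOutflow_union hdisj, hP.netOutflow_listArcs,
      hQ.netOutflow_listArcs, two_smul]

end Augment

section Main
variable {V : Type*} [DecidableEq V] {A : Finset (V × V)} {u s t v : V} {p q : List V}

theorem IsDipath.erase (hp : IsDipath A u v p) {e : V × V}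
    (he : e ∉ listArcs p) : IsDipath (A.erase e) u v p :=
  hp.of_listArcs_subset fun _ hf =>
    Finset.mem_erase.2 ⟨fun hfe => he (hfe ▸ hf), hp.mem_of_mem_listArcs hf⟩

theorem reaches_erase_or_of_arcDisjoint (hp : IsDipath A u s p)
    (hq : IsDipath A u t q) (hpq : ArcDisjoint p q) (e : V × V) :
    Reaches (A.erase e) u s ∨ Reaches (A.erase e) u t := by
  by_cases he : e ∈ listArcs p
  · exact Or.inr ⟨q, hq.erase (hpq e he)⟩
  · exact Or.inl ⟨p, hp.erase he⟩

theorem TwoReaches.reaches_erase (h : TwoReaches A s v) (e : V × V) :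
    Reaches (A.erase e) s v := by
  obtain ⟨p, q, hp, hq, hpq⟩ := h
  exact (reaches_erase_or_of_arcDisjoint hp hq hpq e).elim id id

end Main

/-- If `s` and `t` (possibly equal) both two-reach `v`, and `u` has arc-disjoint directed
paths to `s` and to `t`, then `u` two-reaches `v`. -/
theorem stmt_3 {V : Type*} [Fintype V] [DecidableEq V] (A : Finset (V × V))
    (s t v u : V) (hs : TwoReaches A s v) (ht : TwoReaches A t v)
    (h : ∃ p q : List V, IsDipath A u s p ∧ IsDipath A u t q ∧ ArcDisjoint p q) :
    TwoReaches A u v := by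
  obtain ⟨p, q, hp, hq, hpq⟩ := h
  refine twoReaches_of_forall_reaches_erase fun e => ?_
  rcases reaches_erase_or_of_arcDisjoint hp hq hpq e with hus | hut
  · exact hus.trans (hs.reaches_erase e)
  · exact hut.trans (ht.reaches_erase e)
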